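/- arXiv:1704.07204 — 3 statements merged into one kernel-verified Lean document; each statement's English description precedes it below -/
import Mathlib

section
/- In $\mathbb{R}^d$, let $y_1, \ldots, y_k$ be points, $c \in \mathbb{R}^d$, and suppose there exist $\alpha_1, \ldots, \alpha_k \ge 0$ with $\sum_i \alpha_i = 1$ and $\sum_i \alpha_i (c - y_i) = 0$ (i.e., $c$ is in the convex hull of the $y_i$). Suppose further that $|c - y_i| = \rho$ for all $i$. Then for any $r \ge \rho$ and any point $x$ with $|x - y_i| \le r$ for all $i$, we have $|c - x| \le \sqrt{r^2 - \rho^2}$. -/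
open scoped RealInnerProductSpace

/-- Euclidean excess inequality: if `c` is in the convex hull of `y₁,…,y_k`, all at
distance `ρ` from `c`, then any `x` within distance `r ≥ ρ` of all the `yᵢ` satisfies
`‖c - x‖ ≤ √(r² - ρ²)`. -/
theorem stmt_7 (d k : ℕ) (y : Fin k → EuclideanSpace ℝ (Fin d))
    (c x : EuclideanSpace ℝ (Fin d)) (α : Fin k → ℝ)
    (hα : ∀ i, 0 ≤ α i) (hsum : ∑ i, α i = 1)
    (hcomb : ∑ i, α i • (c - y i) = 0)
    (ρ r : ℝ) (hρ : ∀ i, ‖c - y i‖ = ρ) (hr : ρ ≤ r)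
    (hx : ∀ i, ‖x - y i‖ ≤ r) :
    ‖c - x‖ ≤ Real.sqrt (r ^ 2 - ρ ^ 2) := by
  rcases Nat.eq_zero_or_pos k with hk | hk
  · subst hk; simp at hsum
  have hρ0 : 0 ≤ ρ := by
    have := hρ ⟨0, hk⟩
    rw [← this]; exact norm_nonneg _
  have hr0 : 0 ≤ r := le_trans hρ0 hr
  have h1 : ∀ i, ‖x - y i‖ ^ 2 = ‖x - c‖ ^ 2 + 2 * ⟪x - c, c - y i⟫ + ρ ^ 2 := by
    intro i
    have hxy : x - y i = (x - c) + (c - y i) := by abel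
    rw [hxy, norm_add_sq_real, hρ i]
  have key : ‖x - c‖ ^ 2 + ρ ^ 2 ≤ r ^ 2 := by
    have hsum2 : ∑ i, α i * ‖x - y i‖ ^ 2 = ‖x - c‖ ^ 2 + ρ ^ 2 := by
      calc ∑ i, α i * ‖x - y i‖ ^ 2
          = ∑ i, (α i * ‖x - c‖ ^ 2 + 2 * ⟪x - c, α i • (c - y i)⟫ + α i * ρ ^ 2) := by
            apply Finset.sum_congr rfl; intro i _
            rw [h1 i, real_inner_smul_right]; ring
        _ = (∑ i, α i) * ‖x - c‖ ^ 2 + 2 * ⟪x - c, ∑ i, α i • (c - y i)⟫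
              + (∑ i, α i) * ρ ^ 2 := by
            rw [inner_sum, Finset.sum_add_distrib, Finset.sum_add_distrib,
              Finset.mul_sum, ← Finset.sum_mul, ← Finset.sum_mul]
        _ = ‖x - c‖ ^ 2 + ρ ^ 2 := by
            rw [hsum, hcomb, inner_zero_right]; ring
    rw [← hsum2]
    calc ∑ i, α i * ‖x - y i‖ ^ 2 ≤ ∑ i, α i * r ^ 2 := by
          apply Finset.sum_le_sum; intro i _
          exact mul_le_mul_of_nonneg_left
            (pow_le_pow_left₀ (norm_nonneg _) (hx i) 2) (hα i)
      _ = r ^ 2 := by rw [← Finset.sum_mul, hsum, one_mul]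
  have : ‖c - x‖ ^ 2 ≤ r ^ 2 - ρ ^ 2 := by
    rw [norm_sub_rev]; linarith
  exact (Real.le_sqrt (norm_nonneg _) (by nlinarith)).mpr this
end

section
/- For two closed balls of radius $r$ in $\mathbb{R}^d$ with centers $c_1, c_2$ at distance $t \in [0, 2r]$, the volume of their union satisfies $\mathrm{Vol}(B_r(c_1) \cup B_r(c_2)) \ge \omega_d r^d + \omega_{d-1} r^{d-1} t - C r^{d-2} t^2$ for a constant $C = C(d) > 0$ depending only on $d$. -/
/-!
After a rigid motion the centres are `0` and `t • e₀`. The union then contains the half of the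
first ball with `x₀ < 0`, the half of the second ball with `x₀ > t`, and between them the cylinder
`[0, t] × B(0, ρ)` as soon as `(t/2)² + ρ² ≤ r²`. The two half balls are a translated copy of a
whole ball, so `Vol ≥ ω_d r^d + ω_{d-1} ρ^{d-1} t`. Taking `ρ = r (1 - (t/2r)²)`, Bernoulli's
inequality bounds the loss `ω_{d-1} t (r^{d-1} - ρ^{d-1})` by `ω_{d-1} (d-1)/2 · r^{d-2} t²`.
-/

open MeasureTheory

/-- The Lebesgue volume of the unit ball in `ℝ^n`. -/
noncomputable def unitBallVol (n : ℕ) : ℝ :=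
  (volume (Metric.ball (0 : EuclideanSpace ℝ (Fin n)) 1)).toReal

open Metric

section IsometryInvariance

variable {E : Type*} [NormedAddCommGroup E] [InnerProductSpace ℝ E] [FiniteDimensional ℝ E]
  [MeasurableSpace E] [BorelSpace E]

theorem exists_isometry_measurePreserving_map_pair {c₁ c₂ c₁' c₂' : E}
    (h : dist c₁' c₂' = dist c₁ c₂) :
    ∃ g : E → E, Isometry g ∧ MeasurePreserving g ∧ g c₁' = c₁ ∧ g c₂' = c₂ := by
  have hnorm : ‖c₂' - c₁'‖ = ‖c₂ - c₁‖ := by rwa [← dist_eq_norm', ← dist_eq_norm']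
  set f := Submodule.reflection (ℝ ∙ (c₂' - c₁' - (c₂ - c₁)))ᗮ
  have hf : f (c₂' - c₁') = c₂ - c₁ := Submodule.reflection_sub hnorm
  refine ⟨fun x => c₁ + f (x - c₁'), ?_, ?_, by simp, by simp [hf]⟩
  · exact (isometry_add_left c₁).comp (f.isometry.comp (IsometryEquiv.subRight c₁').isometry)
  · exact (measurePreserving_add_left volume c₁).comp
      (f.measurePreserving.comp (measurePreserving_sub_right volume c₁'))

theorem volume_closedBall_union_closedBall_eq_of_dist_eq {c₁ c₂ c₁' c₂' : E}
    (h : dist c₁' c₂' = dist c₁ c₂) (r₁ r₂ : ℝ) :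
    volume (closedBall c₁ r₁ ∪ closedBall c₂ r₂) =
      volume (closedBall c₁' r₁ ∪ closedBall c₂' r₂) := by
  obtain ⟨g, hiso, hmp, rfl, rfl⟩ := exists_isometry_measurePreserving_map_pair h
  rw [← hmp.measure_preimage
    (measurableSet_closedBall.union measurableSet_closedBall).nullMeasurableSet,
    Set.preimage_union, hiso.preimage_closedBall, hiso.preimage_closedBall]

end IsometryInvariance

section Halfspaces

variable {ι : Type*} [Fintype ι]

theorem volume_setOf_apply_eq_zero (i : ι) :
    volume {x : EuclideanSpace ℝ ι | x i = 0} = 0 := by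
  classical
  refine Measure.addHaar_submodule volume (LinearMap.ker (EuclideanSpace.projₗ i)) fun h => ?_
  have : EuclideanSpace.single i (1 : ℝ) ∈ LinearMap.ker (EuclideanSpace.projₗ i) :=
    h ▸ Submodule.mem_top
  simp at this

theorem volume_le_inter_neg_add_inter_pos (s : Set (EuclideanSpace ℝ ι)) (i : ι) :
    volume s ≤ volume (s ∩ {x | x i < 0}) + volume (s ∩ {x | 0 < x i}) := by
  refine (measure_mono_ae ?_).trans (measure_union_le _ _)
  refine ae_le_set.2 (measure_mono_null (fun x hx => ?_) (volume_setOf_apply_eq_zero i))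
  obtain ⟨hxs, hx⟩ := hx
  simp only [Set.mem_union, Set.mem_inter_iff, Set.mem_ofPred_eq, not_or, not_and] at hx
  exact le_antisymm (not_lt.1 (hx.2 hxs)) (not_lt.1 (hx.1 hxs))

theorem volume_closedBall_single_inter_lt [DecidableEq ι] (i : ι) (t r : ℝ) :
    volume (closedBall (EuclideanSpace.single i t) r ∩ {x | t < x i}) =
      volume (closedBall 0 r ∩ {x : EuclideanSpace ℝ ι | 0 < x i}) := by
  rw [← measure_preimage_add_right _ (EuclideanSpace.single i t)]
  congr 1
  ext x
  simp [dist_eq_norm]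

end Halfspaces

theorem closedBall_zero_eq_setOf_sum_sq_le {ι : Type*} [Fintype ι] {ρ : ℝ} (hρ : 0 ≤ ρ) :
    closedBall (0 : EuclideanSpace ℝ ι) ρ = {x | ∑ i, x i ^ 2 ≤ ρ ^ 2} := by
  ext x
  rw [mem_closedBall_zero_iff, ← pow_le_pow_iff_left₀ (norm_nonneg x) hρ two_ne_zero,
    EuclideanSpace.real_norm_sq_eq, Set.mem_ofPred_eq]


def euclideanCylinder (n : ℕ) (t ρ : ℝ) : Set (EuclideanSpace ℝ (Fin (n + 1))) :=
  {x | x 0 ∈ Set.Icc 0 t ∧ ∑ j : Fin n, x j.succ ^ 2 ≤ ρ ^ 2}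

theorem volume_euclideanCylinder (n : ℕ) (t : ℝ) {ρ : ℝ} (hρ : 0 ≤ ρ) :
    volume (euclideanCylinder n t ρ) =
      ENNReal.ofReal t * volume (closedBall (0 : EuclideanSpace ℝ (Fin n)) ρ) := by
  set D : Set (Fin n → ℝ) := {y | ∑ j, y j ^ 2 ≤ ρ ^ 2}
  have hD : MeasurableSet D := measurableSet_le (by fun_prop) measurable_const
  have hDvol : volume D = volume (closedBall (0 : EuclideanSpace ℝ (Fin n)) ρ) := by
    rw [closedBall_zero_eq_setOf_sum_sq_le hρ,
      ← (PiLp.volume_preserving_ofLp (Fin n)).measure_preimage hD.nullMeasurableSet]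
    rfl
  have hmp := (volume_preserving_piFinSuccAbove (fun _ : Fin (n + 1) => ℝ) 0).comp
    (PiLp.volume_preserving_ofLp (Fin (n + 1)))
  have hcyl : euclideanCylinder n t ρ =
      (MeasurableEquiv.piFinSuccAbove (fun _ => ℝ) 0 ∘ WithLp.ofLp) ⁻¹' (Set.Icc 0 t ×ˢ D) := by
    ext x
    simp [euclideanCylinder, D, MeasurableEquiv.piFinSuccAbove, Fin.tail]
  rw [hcyl, hmp.measure_preimage (measurableSet_Icc.prod hD).nullMeasurableSet,
    Measure.volume_eq_prod, Measure.prod_prod, Real.volume_Icc, sub_zero, hDvol]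

theorem dist_single_zero_sq {n : ℕ} (x : EuclideanSpace ℝ (Fin (n + 1))) (s : ℝ) :
    dist x (EuclideanSpace.single 0 s) ^ 2 = (x 0 - s) ^ 2 + ∑ j : Fin n, x j.succ ^ 2 := by
  rw [dist_eq_norm, EuclideanSpace.real_norm_sq_eq, Fin.sum_univ_succ]
  simp [Fin.succ_ne_zero]

theorem euclideanCylinder_subset_union {n : ℕ} {t ρ r : ℝ} (hr : 0 ≤ r)
    (h : (t / 2) ^ 2 + ρ ^ 2 ≤ r ^ 2) :
    euclideanCylinder n t ρ ⊆ closedBall 0 r ∪ closedBall (EuclideanSpace.single 0 t) r := by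
  rintro x ⟨⟨hx₀, hxt⟩, hx⟩
  have mem_of_near : ∀ s, (x 0 - s) ^ 2 ≤ (t / 2) ^ 2 →
      x ∈ closedBall (EuclideanSpace.single 0 s) r := fun s hs => by
    rw [mem_closedBall, ← pow_le_pow_iff_left₀ dist_nonneg hr two_ne_zero, dist_single_zero_sq]
    linarith
  rcases le_total (x 0) (t / 2) with hc | hc
  · left
    have hzero : EuclideanSpace.single (0 : Fin (n + 1)) (0 : ℝ) = 0 := by simp
    exact hzero ▸ mem_of_near 0 (by nlinarith)
  · right
    exact mem_of_near t (by nlinarith)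

theorem volume_closedBall_add_volume_euclideanCylinder_le {n : ℕ} {t ρ r : ℝ} (ht : 0 ≤ t)
    (hr : 0 ≤ r) (h : (t / 2) ^ 2 + ρ ^ 2 ≤ r ^ 2) :
    volume (closedBall (0 : EuclideanSpace ℝ (Fin (n + 1))) r) + volume (euclideanCylinder n t ρ) ≤
      volume (closedBall 0 r ∪ closedBall (EuclideanSpace.single (0 : Fin (n + 1)) t) r) := by
  set left := closedBall (0 : EuclideanSpace ℝ (Fin (n + 1))) r ∩ {x | x 0 < 0}
  set right := closedBall (EuclideanSpace.single (0 : Fin (n + 1)) t) r ∩ {x | t < x 0}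
  have hcoord (i : Fin (n + 1)) : Measurable fun x : EuclideanSpace ℝ (Fin (n + 1)) => x i := by
    fun_prop
  have hright : MeasurableSet right :=
    measurableSet_closedBall.inter (measurableSet_lt measurable_const (hcoord 0))
  have hcyl : MeasurableSet (euclideanCylinder n t ρ) :=
    (hcoord 0 measurableSet_Icc).inter <| measurableSet_le
      (Finset.measurable_sum _ fun (j : Fin n) _ => (hcoord j.succ).pow_const 2) measurable_const
  have hdisj₁ : Disjoint left right := Set.disjoint_left.2 fun x hl hr =>
    (hl.2.trans_le (ht.trans hr.2.le)).false
  have hdisj₂ : Disjoint (left ∪ right) (euclideanCylinder n t ρ) :=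
    Set.disjoint_left.2 fun x hx hc => by
      rcases hx with hl | hr
      · exact (hl.2.trans_le hc.1.1).false
      · exact (hr.2.trans_le hc.1.2).false
  calc _ ≤ volume left + volume right + volume (euclideanCylinder n t ρ) := by
        rw [volume_closedBall_single_inter_lt]
        gcongr
        exact volume_le_inter_neg_add_inter_pos _ 0
    _ = volume (left ∪ right ∪ euclideanCylinder n t ρ) := by
        rw [measure_union hdisj₂ hcyl, measure_union hdisj₁ hright]
    _ ≤ _ := measure_mono <| Set.union_subset
        (Set.union_subset (Set.inter_subset_left.trans Set.subset_union_left)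
          (Set.inter_subset_left.trans Set.subset_union_right))
        (euclideanCylinder_subset_union hr h)

theorem unitBallVol_nonneg (n : ℕ) : 0 ≤ unitBallVol n := ENNReal.toReal_nonneg

theorem toReal_volume_closedBall {n : ℕ} (x : EuclideanSpace ℝ (Fin n)) {r : ℝ} (hr : 0 ≤ r) :
    (volume (closedBall x r)).toReal = unitBallVol n * r ^ n := by
  rw [Measure.addHaar_closedBall volume x hr, finrank_euclideanSpace_fin, ENNReal.toReal_mul,
    ENNReal.toReal_ofReal (by positivity), unitBallVol, mul_comm]

theorem unitBallVol_mul_pow_add_le_toReal_volume_union {n : ℕ} {t ρ r : ℝ} (ht : 0 ≤ t)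
    (hr : 0 ≤ r) (hρ : 0 ≤ ρ) (h : (t / 2) ^ 2 + ρ ^ 2 ≤ r ^ 2) :
    unitBallVol (n + 1) * r ^ (n + 1) + t * (unitBallVol n * ρ ^ n) ≤
      (volume (closedBall 0 r ∪
        closedBall (EuclideanSpace.single (0 : Fin (n + 1)) t) r)).toReal := by
  have hvol := volume_closedBall_add_volume_euclideanCylinder_le (n := n) ht hr h
  rw [volume_euclideanCylinder n t hρ] at hvol
  have hball : volume (closedBall (0 : EuclideanSpace ℝ (Fin (n + 1))) r) ≠ ⊤ :=
    measure_closedBall_lt_top.ne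
  have hcyl : ENNReal.ofReal t * volume (closedBall (0 : EuclideanSpace ℝ (Fin n)) ρ) ≠ ⊤ :=
    ENNReal.mul_ne_top ENNReal.ofReal_ne_top measure_closedBall_lt_top.ne
  have hreal := ENNReal.toReal_mono
    (measure_union_lt_top measure_closedBall_lt_top measure_closedBall_lt_top).ne hvol
  rwa [ENNReal.toReal_add hball hcyl, ENNReal.toReal_mul, ENNReal.toReal_ofReal ht,
    toReal_volume_closedBall _ hr, toReal_volume_closedBall _ hρ] at hreal

-- `r - ρ = t² / (4r)`: the radius loss is quadratic in `t`, which the `t²` error term absorbs.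
noncomputable def cylinderRadius (r t : ℝ) : ℝ := r * (1 - (t / (2 * r)) ^ 2)

section CylinderRadius

variable {r t : ℝ}

theorem cylinderRadius_nonneg (hr : 0 < r) (ht : 0 ≤ t) (ht2 : t ≤ 2 * r) :
    0 ≤ cylinderRadius r t :=
  mul_nonneg hr.le <| sub_nonneg.2 <|
    pow_le_one₀ (by positivity) (div_le_one_of_le₀ ht2 (by positivity))

theorem sq_half_add_sq_cylinderRadius_le (hr : 0 < r) (ht : 0 ≤ t) (ht2 : t ≤ 2 * r) :
    (t / 2) ^ 2 + cylinderRadius r t ^ 2 ≤ r ^ 2 := by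
  set u := t / (2 * r)
  have hu : u ^ 2 ≤ 1 := pow_le_one₀ (by positivity) (div_le_one_of_le₀ ht2 (by positivity))
  have ht' : t / 2 = r * u := by simp only [u]; field_simp
  rw [cylinderRadius, ht']
  nlinarith [mul_nonneg (mul_nonneg (sq_nonneg r) (sq_nonneg u)) (sub_nonneg.2 hu)]

theorem mul_sub_pow_cylinderRadius_le (n : ℕ) (hr : 0 < r) (ht : 0 ≤ t) (ht2 : t ≤ 2 * r) :
    t * (r ^ n - cylinderRadius r t ^ n) ≤ n / 2 * r ^ ((n : ℝ) - 1) * t ^ 2 := by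
  set u := t / (2 * r)
  have hu : u ≤ 1 := div_le_one_of_le₀ ht2 (by positivity)
  have hu0 : 0 ≤ u := by positivity
  have bernoulli : 1 - n * u ^ 2 ≤ (1 - u ^ 2) ^ n := by
    simpa [sub_eq_add_neg] using one_add_mul_le_pow (a := -u ^ 2) (by nlinarith) n
  have htu : t * u ^ 2 ≤ t ^ 2 / (2 * r) :=
    calc t * u ^ 2 ≤ t * u := by gcongr; nlinarith
      _ = t ^ 2 / (2 * r) := by simp only [u]; ring
  rw [cylinderRadius, mul_pow, Real.rpow_sub hr, Real.rpow_natCast, Real.rpow_one]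
  calc t * (r ^ n - r ^ n * (1 - u ^ 2) ^ n)
      ≤ t * (r ^ n * (n * u ^ 2)) := by
        gcongr
        nlinarith [pow_nonneg hr.le n]
    _ = n * r ^ n * (t * u ^ 2) := by ring
    _ ≤ n * r ^ n * (t ^ 2 / (2 * r)) := by gcongr
    _ = n / 2 * (r ^ n / r) * t ^ 2 := by field_simp

end CylinderRadius

/-- Lower bound for the volume of a union of two balls of radius `r` in `ℝ^d` with
centers at distance `t ∈ [0, 2r]`:
`Vol(B_r(c₁) ∪ B_r(c₂)) ≥ ω_d r^d + ω_{d-1} r^{d-1} t - C r^{d-2} t²`. -/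
theorem stmt_11 (d : ℕ) (hd : 1 ≤ d) :
    ∃ C : ℝ, 0 < C ∧ ∀ (r t : ℝ) (c₁ c₂ : EuclideanSpace ℝ (Fin d)),
      0 < r → dist c₁ c₂ = t → 0 ≤ t → t ≤ 2 * r →
      unitBallVol d * r ^ d + unitBallVol (d - 1) * r ^ (d - 1) * t
          - C * r ^ ((d : ℝ) - 2) * t ^ 2 ≤
        (volume (Metric.closedBall c₁ r ∪ Metric.closedBall c₂ r)).toReal := by
  obtain ⟨n, rfl⟩ := Nat.exists_eq_add_of_le' hd
  have hω := unitBallVol_nonneg n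
  refine ⟨unitBallVol n * n / 2 + 1, by positivity, fun r t c₁ c₂ hr hdist ht ht2 => ?_⟩
  have hcanonical : dist (0 : EuclideanSpace ℝ (Fin (n + 1))) (EuclideanSpace.single 0 t) =
      dist c₁ c₂ := by
    simp [hdist, abs_of_nonneg ht]
  have hunion := unitBallVol_mul_pow_add_le_toReal_volume_union (n := n) ht hr.le
    (cylinderRadius_nonneg hr ht ht2) (sq_half_add_sq_cylinderRadius_le hr ht ht2)
  have hdeficit := mul_sub_pow_cylinderRadius_le n hr ht ht2
  have hexp : ((n + 1 : ℕ) : ℝ) - 2 = (n : ℝ) - 1 := by push_cast; ring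
  rw [volume_closedBall_union_closedBall_eq_of_dist_eq hcanonical, Nat.add_sub_cancel, hexp]
  linarith [mul_le_mul_of_nonneg_left hdeficit hω,
    mul_nonneg (Real.rpow_nonneg hr.le ((n : ℝ) - 1)) (sq_nonneg t)]
end

section
/- Suppose $r = r(n) > 0$ satisfies $n\omega_d r^d \cdot r \to 0$ and $n\omega_d r^d \to \infty$ as $n \to \infty$, where $\omega_d > 0$ and $d \ge 1$ are fixed. Define $r_0 = r\left(\frac{\omega_d}{\alpha}(1 + |\log r|)\right)^{1/d}$ for a fixed constant $\alpha \in (0, \omega_d)$. Then (a) $r/r_0 \to 0$, (b) $n\omega_d r_0^d \cdot r_0^2 \to 0$, and (c) for any fixed $k \ge 0$, $r_0^{-d} n^{k+1} e^{-\alpha n r_0^d} = o\left(n(n\omega_d r^d)^k e^{-n\omega_d r^d}\right)$. -/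
/-! With `Λ = n ω_d r^d` and `L = (ω_d/α)(1 + |log r|)` we have `r₀ = r L^{1/d}`, so
`r/r₀ = L^{-1/d}` and `n ω_d r₀^d r₀² = (Λ r) · r L^{1 + 2/d}`. Since `r = Λ r / Λ → 0`,
`L → ∞` while `r L^s → 0` (substitute `r = e^{1-y}` with `y = 1 + |log r| → ∞`).
For (c), `α n r₀^d = Λ (1 + |log r|)`, so `e^{-α n r₀^d} = e^{-Λ} r^Λ`, and once
`Λ ≥ d(k+1) + 1` the ratio of the two sides is at most `r / ω_d^k → 0`. -/

open Filter Real Asymptotics Topology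

theorem tendsto_zero_of_mul_tendsto_zero_of_tendsto_atTop {ι : Type*} {l : Filter ι}
    {f g : ι → ℝ} (hfg : Tendsto (fun x => f x * g x) l (𝓝 0)) (hf : Tendsto f l atTop) :
    Tendsto g l (𝓝 0) := by
  refine (hfg.div_atTop hf).congr' ?_
  filter_upwards [hf.eventually_gt_atTop 0] with x hx
  field_simp

theorem isLittleO_of_norm_le_mul_of_tendsto_zero {ι : Type*} {l : Filter ι} {f g u : ι → ℝ}
    (hu : Tendsto u l (𝓝 0)) (h : ∀ᶠ x in l, ‖f x‖ ≤ u x * ‖g x‖) : f =o[l] g := by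
  refine isLittleO_iff.2 fun c hc => ?_
  filter_upwards [h, hu.eventually (ge_mem_nhds hc)] with x hfx hux
  exact hfx.trans (mul_le_mul_of_nonneg_right hux (norm_nonneg _))

theorem mul_rpow_one_div_pow {d : ℕ} (hd : d ≠ 0) (t : ℝ) {L : ℝ} (hL : 0 ≤ L) :
    (t * L ^ (1 / d : ℝ)) ^ d = t ^ d * L := by
  rw [mul_pow, one_div, rpow_inv_natCast_pow hL hd]

theorem tendsto_div_of_eq_mul_rpow {ι : Type*} {l : Filter ι} {r r₀ L : ι → ℝ} {p : ℝ}
    (hp : 0 < p) (hr : ∀ x, r x ≠ 0) (hL : Tendsto L l atTop)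
    (hr₀ : ∀ x, r₀ x = r x * L x ^ p) :
    Tendsto (fun x => r x / r₀ x) l (𝓝 0) :=
  ((tendsto_rpow_atTop hp).comp hL).inv_tendsto_atTop.congr fun x => by
    rw [hr₀, div_mul_cancel_left₀ (hr x)]
    rfl

theorem tendsto_mul_pow_mul_sq_of_eq_mul_rpow {ι : Type*} {l : Filter ι} {N r r₀ L : ι → ℝ}
    {d : ℕ} (hd : d ≠ 0) (hL : ∀ x, 0 < L x) (hr₀ : ∀ x, r₀ x = r x * L x ^ (1 / d : ℝ))
    (hNr : Tendsto (fun x => N x * r x ^ d * r x) l (𝓝 0))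
    (hrL : Tendsto (fun x => r x * L x ^ (1 + 2 / d : ℝ)) l (𝓝 0)) :
    Tendsto (fun x => N x * r₀ x ^ d * r₀ x ^ 2) l (𝓝 0) := by
  have h := hNr.mul hrL
  rw [zero_mul] at h
  refine h.congr fun x => ?_
  have hsq : L x ^ (1 + 2 / d : ℝ) = L x * (L x ^ (1 / d : ℝ)) ^ 2 := by
    rw [rpow_add (hL x), rpow_one, ← rpow_natCast, ← rpow_mul (hL x).le]
    ring_nf
  rw [hr₀, mul_rpow_one_div_pow hd _ (hL x).le, hsq]
  ring

/-- The paper's `(r₀ / r)^d` with `c = ω_d / α`, as a function of `x = r`. -/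
noncomputable def logScale (c x : ℝ) : ℝ := c * (1 + |log x|)

section logScale

variable {c : ℝ}

theorem logScale_pos (hc : 0 < c) (x : ℝ) : 0 < logScale c x := by
  unfold logScale
  positivity

theorem tendsto_logScale_nhdsGT_zero (hc : 0 < c) : Tendsto (logScale c) (𝓝[>] 0) atTop :=
  (tendsto_atTop_add_const_left _ 1 (tendsto_abs_atBot_atTop.comp tendsto_log_nhdsGT_zero))
    |>.const_mul_atTop hc

theorem tendsto_mul_logScale_rpow_nhdsGT_zero (hc : 0 < c) (s : ℝ) :
    Tendsto (fun x => x * logScale c x ^ s) (𝓝[>] 0) (𝓝 0) := by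
  have h := ((tendsto_rpow_mul_exp_neg_mul_atTop_nhds_zero s 1 one_pos).comp
    (tendsto_logScale_nhdsGT_zero one_pos)).const_mul (exp 1 * c ^ s)
  rw [mul_zero] at h
  refine h.congr' ?_
  filter_upwards [Ioo_mem_nhdsGT one_pos] with x ⟨hx0, hx1⟩
  have hlog : 0 ≤ 1 + |log x| := by positivity
  -- for `0 < x < 1`, `x = e · e^{-(1 + |log x|)}`
  have hx : x = exp 1 * exp (-(1 + |log x|)) := by
    rw [← exp_add, abs_of_neg (log_neg hx0 hx1), neg_add, neg_neg, add_neg_cancel_left,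
      exp_log hx0]
  simp only [Function.comp_apply, logScale, one_mul, neg_mul]
  rw [mul_rpow hc.le hlog]
  linear_combination (-(c ^ s * (1 + |log x|) ^ s)) * hx

theorem exp_neg_mul_one_add_abs_log_le {t s : ℝ} {m : ℕ} (ht0 : 0 < t) (ht1 : t ≤ 1)
    (hs : (m : ℝ) ≤ s) : exp (-(s * (1 + |log t|))) ≤ exp (-s) * t ^ m := by
  have hlog : log t ≤ 0 := log_nonpos ht0.le ht1
  have ht : t ^ m = exp (m * log t) := by rw [exp_nat_mul, exp_log ht0]
  rw [ht, ← exp_add, exp_le_exp, abs_of_nonpos hlog]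
  nlinarith [mul_nonneg (sub_nonneg.2 hs) (neg_nonneg.2 hlog)]

theorem pow_succ_mul_exp_div_le {d k : ℕ} {ωd α n t ρ : ℝ} (hωd : 0 < ωd) (hα : 0 < α)
    (hn : 0 < n) (ht0 : 0 < t) (ht1 : t ≤ 1) (hL : 1 ≤ logScale (ωd / α) t)
    (hΛ : ((d * (k + 1) + 1 : ℕ) : ℝ) ≤ n * ωd * t ^ d) (hρ : ρ ^ d = t ^ d * logScale (ωd / α) t) :
    n ^ (k + 1) * exp (-(α * n * ρ ^ d)) / ρ ^ d
      ≤ t / ωd ^ k * (n * (n * ωd * t ^ d) ^ k * exp (-(n * ωd * t ^ d))) := by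
  have hαρ : α * n * ρ ^ d = n * ωd * t ^ d * (1 + |log t|) := by
    rw [hρ, logScale]
    field_simp
  have hρt : t ^ d ≤ ρ ^ d := by
    rw [hρ]
    exact le_mul_of_one_le_right (by positivity) hL
  calc n ^ (k + 1) * exp (-(α * n * ρ ^ d)) / ρ ^ d
      ≤ n ^ (k + 1) * (exp (-(n * ωd * t ^ d)) * t ^ (d * (k + 1) + 1)) / t ^ d := by
        rw [hαρ]
        gcongr
        exact exp_neg_mul_one_add_abs_log_le ht0 ht1 hΛ
    _ = t / ωd ^ k * (n * (n * ωd * t ^ d) ^ k * exp (-(n * ωd * t ^ d))) := by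
        field_simp
        ring

theorem isLittleO_pow_mul_exp_div_of_pow_eq_mul_logScale {d : ℕ} {ωd α : ℝ} {r r₀ : ℕ → ℝ}
    (hωd : 0 < ωd) (hα : 0 < α) (hr : Tendsto r atTop (𝓝[>] 0))
    (hΛ : Tendsto (fun n : ℕ => (n : ℝ) * ωd * r n ^ d) atTop atTop)
    (hr₀ : ∀ n, r₀ n ^ d = r n ^ d * logScale (ωd / α) (r n)) (k : ℕ) :
    (fun n : ℕ => (n : ℝ) ^ (k + 1) * exp (-(α * n * r₀ n ^ d)) / r₀ n ^ d)
      =o[atTop]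
      (fun n : ℕ => (n : ℝ) * ((n : ℝ) * ωd * r n ^ d) ^ k * exp (-((n : ℝ) * ωd * r n ^ d))) := by
  have hu : Tendsto (fun n => r n / ωd ^ k) atTop (𝓝 0) := by
    simpa using (tendsto_nhds_of_tendsto_nhdsWithin hr).div_const (ωd ^ k)
  refine isLittleO_of_norm_le_mul_of_tendsto_zero hu ?_
  filter_upwards [hr (Ioo_mem_nhdsGT one_pos),
    ((tendsto_logScale_nhdsGT_zero (div_pos hωd hα)).comp hr).eventually_ge_atTop 1,
    hΛ.eventually_ge_atTop _, eventually_gt_atTop 0] with n ⟨hr0, hr1⟩ hL hΛn hn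
  have hr₀pos : 0 < r₀ n ^ d := by
    rw [hr₀]
    exact mul_pos (by positivity) (logScale_pos (div_pos hωd hα) _)
  rw [norm_of_nonneg (by positivity), norm_of_nonneg (by positivity)]
  exact pow_succ_mul_exp_div_le hωd hα (by exact_mod_cast hn) hr0 hr1.le hL hΛn (hr₀ n)

end logScale

theorem stmt_17_general (d : ℕ) (hd : 1 ≤ d) (ωd : ℝ) (hωd : 0 < ωd)
    (r r₀ : ℕ → ℝ) (hr : ∀ n, 0 < r n)
    (h1 : Tendsto (fun n : ℕ => (n : ℝ) * ωd * r n ^ d * r n) atTop (nhds 0))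
    (h2 : Tendsto (fun n : ℕ => (n : ℝ) * ωd * r n ^ d) atTop atTop)
    (α : ℝ) (hα : 0 < α)
    (hr₀ : ∀ n, r₀ n = r n * (ωd / α * (1 + |Real.log (r n)|)) ^ ((1 : ℝ) / d))
    (k : ℕ) :
    Tendsto (fun n : ℕ => r n / r₀ n) atTop (nhds 0) ∧
    Tendsto (fun n : ℕ => (n : ℝ) * ωd * r₀ n ^ d * r₀ n ^ 2) atTop (nhds 0) ∧
    (fun n : ℕ => (n : ℝ) ^ (k + 1) * Real.exp (-(α * n * r₀ n ^ d)) / r₀ n ^ d)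
      =o[atTop]
      (fun n : ℕ => (n : ℝ) * ((n : ℝ) * ωd * r n ^ d) ^ k *
        Real.exp (-((n : ℝ) * ωd * r n ^ d))) := by
  have hd0 : d ≠ 0 := Nat.one_le_iff_ne_zero.mp hd
  have hc : 0 < ωd / α := div_pos hωd hα
  have hr₀' : ∀ n, r₀ n = r n * logScale (ωd / α) (r n) ^ ((1 : ℝ) / d) := hr₀
  have hr_lim : Tendsto r atTop (𝓝[>] 0) :=
    tendsto_nhdsWithin_iff.2
      ⟨tendsto_zero_of_mul_tendsto_zero_of_tendsto_atTop h1 h2, Eventually.of_forall hr⟩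
  refine ⟨?_, ?_, ?_⟩
  · exact tendsto_div_of_eq_mul_rpow (by positivity) (fun n => (hr n).ne')
      ((tendsto_logScale_nhdsGT_zero hc).comp hr_lim) hr₀'
  · exact tendsto_mul_pow_mul_sq_of_eq_mul_rpow hd0 (fun n => logScale_pos hc _) hr₀' h1
      ((tendsto_mul_logScale_rpow_nhdsGT_zero hc _).comp hr_lim)
  · refine isLittleO_pow_mul_exp_div_of_pow_eq_mul_logScale hωd hα hr_lim h2 (fun n => ?_) k
    rw [hr₀', mul_rpow_one_div_pow hd0 _ (logScale_pos hc _).le]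

/-- Properties of the auxiliary radius `r₀ = r (ω_d/α (1 + |log r|))^{1/d}`:
(a) `r/r₀ → 0`, (b) `n ω_d r₀^d · r₀² → 0`, and
(c) `r₀^{-d} n^{k+1} e^{-α n r₀^d} = o(n Λ^k e^{-Λ})` where `Λ = n ω_d r^d`. -/
theorem stmt_17 (d : ℕ) (hd : 1 ≤ d) (ωd : ℝ) (hωd : 0 < ωd)
    (r r₀ : ℕ → ℝ) (hr : ∀ n, 0 < r n)
    (h1 : Tendsto (fun n : ℕ => (n : ℝ) * ωd * r n ^ d * r n) atTop (nhds 0))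
    (h2 : Tendsto (fun n : ℕ => (n : ℝ) * ωd * r n ^ d) atTop atTop)
    (α : ℝ) (hα : 0 < α) (hα' : α < ωd)
    (hr₀ : ∀ n, r₀ n = r n * (ωd / α * (1 + |Real.log (r n)|)) ^ ((1 : ℝ) / d))
    (k : ℕ) :
    Tendsto (fun n : ℕ => r n / r₀ n) atTop (nhds 0) ∧
    Tendsto (fun n : ℕ => (n : ℝ) * ωd * r₀ n ^ d * r₀ n ^ 2) atTop (nhds 0) ∧
    (fun n : ℕ => (n : ℝ) ^ (k + 1) * Real.exp (-(α * n * r₀ n ^ d)) / r₀ n ^ d)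
      =o[atTop]
      (fun n : ℕ => (n : ℝ) * ((n : ℝ) * ωd * r n ^ d) ^ k *
        Real.exp (-((n : ℝ) * ωd * r n ^ d))) :=
  stmt_17_general d hd ωd hωd r r₀ hr h1 h2 α hα hr₀ k
end
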